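/- A matrix P ∈ M_N(ℂ) possesses a two-sided inverse for the product • (i.e., there exists Q with P • Q = Q • P = I, where I is the identity matrix) if and only if all diagonal entries P_{ii}, i = 1,…,N, are nonzero. In particular the set U = {M ∈ M_N(ℂ) : M_{ii} = 1 for all i} is a group under •. -/

import Mathlib

/-!
Read backwards from `k`, i.e. through `j ↦ k - j` in the cyclic group `Fin N`, the condition
`⟨i ≤ j ≤ k⟩` says `k - j ≤ k - i`. So the `k`-th column of `P • Q` is `M_k` times the `k`-th
column of `Q`, where `M_k = cycMask P k` keeps only the entries of `P` with `⟨i ≤ j ≤ k⟩`; after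
this reordering `M_k` is lower triangular with diagonal `(P_ii)`. If no `P_ii` vanishes, every
`M_k` is invertible and the columns of the `M_k⁻¹` assemble into a right `•`-inverse `Q`.
Since `(P • Q)_ii = P_ii Q_ii`, also `Q` has a nonzero diagonal, hence a right inverse, which by
associativity of `•` is `P`.
-/

open Matrix BigOperators Finset

/-- `cyc3 i j k` : the sequence `(i,j,k)` of indices is cyclically ordered `⟨i ≤ j ≤ k⟩`,
i.e. some cyclic rotation of it is weakly increasing, with all entries required to be
equal when the first and last entries coincide. -/
def cyc3 {N : ℕ} (i j k : Fin N) : Prop :=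
  if i = k then j = i
  else (i ≤ j ∧ j ≤ k) ∨ (j ≤ k ∧ k ≤ i) ∨ (k ≤ i ∧ i ≤ j)

instance cyc3.dec {N : ℕ} (i j k : Fin N) : Decidable (cyc3 i j k) := by
  unfold cyc3; infer_instance

/-- The degenerate product `•` on `N × N` complex matrices:
`(P • Q)_{ik} = ∑_{j : ⟨i ≤ j ≤ k⟩} P_{ij} Q_{jk}`. -/
noncomputable def cprod {N : ℕ} (P Q : Matrix (Fin N) (Fin N) ℂ) :
    Matrix (Fin N) (Fin N) ℂ :=
  Matrix.of fun i k => ∑ j ∈ Finset.univ.filter (fun j => cyc3 i j k), P i j * Q j k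

section

variable {N : ℕ}

lemma cyc3_iff_sub_le [NeZero N] {i j k : Fin N} : cyc3 i j k ↔ k - j ≤ k - i := by
  rw [Fin.le_def]
  rcases le_or_gt j k with hj | hj <;> rcases le_or_gt i k with hi | hi <;>
    simp only [Fin.coe_sub_iff_le.mpr, Fin.coe_sub_iff_lt.mpr, hi, hj] <;>
    unfold cyc3 <;> split_ifs <;> omega

lemma cyc3_self_left (i k : Fin N) : cyc3 i i k := by
  unfold cyc3; split_ifs <;> omega

lemma cyc3_self_right (i k : Fin N) : cyc3 i k k := by
  unfold cyc3; split_ifs <;> omega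

lemma cyc3_self_iff {i j : Fin N} : cyc3 i j i ↔ j = i := by
  simp [cyc3]

-- Both sides say that `(i, j, l, m)` is cyclically ordered.
lemma cyc3_and_cyc3_comm (i j l m : Fin N) :
    cyc3 i l m ∧ cyc3 i j l ↔ cyc3 i j m ∧ cyc3 j l m := by
  unfold cyc3; split_ifs <;> omega

lemma cprod_apply (P Q : Matrix (Fin N) (Fin N) ℂ) (i k : Fin N) :
    cprod P Q i k = ∑ j, if cyc3 i j k then P i j * Q j k else 0 := by
  rw [cprod, of_apply, Finset.sum_filter]

lemma cprod_apply_self (P Q : Matrix (Fin N) (Fin N) ℂ) (i : Fin N) :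
    cprod P Q i i = P i i * Q i i := by
  simp [cprod_apply, cyc3_self_iff]

lemma mul_apply_self_eq_one_of_cprod_eq_one {P Q : Matrix (Fin N) (Fin N) ℂ}
    (h : cprod P Q = 1) (i : Fin N) : P i i * Q i i = 1 := by
  rw [← cprod_apply_self, h, one_apply_eq]

lemma one_cprod (P : Matrix (Fin N) (Fin N) ℂ) : cprod 1 P = P := by
  ext i k
  rw [cprod_apply, Finset.sum_eq_single i (fun j _ hj => by simp [one_apply_ne' hj]) (by simp)]
  simp [cyc3_self_left]

lemma cprod_one (P : Matrix (Fin N) (Fin N) ℂ) : cprod P 1 = P := by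
  ext i k
  rw [cprod_apply, Finset.sum_eq_single k (fun j _ hj => by simp [one_apply_ne hj]) (by simp)]
  simp [cyc3_self_right]

lemma cprod_assoc (P Q R : Matrix (Fin N) (Fin N) ℂ) :
    cprod (cprod P Q) R = cprod P (cprod Q R) := by
  ext i m
  simp only [cprod_apply, Finset.sum_mul, Finset.mul_sum, ite_mul, mul_ite, zero_mul, mul_zero,
    Finset.ite_sum_zero, ← ite_and]
  rw [Finset.sum_comm]
  refine Finset.sum_congr rfl fun j _ => Finset.sum_congr rfl fun l _ => ?_
  exact if_congr (cyc3_and_cyc3_comm i j l m) (mul_assoc _ _ _) rfl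

def cycMask (P : Matrix (Fin N) (Fin N) ℂ) (k : Fin N) : Matrix (Fin N) (Fin N) ℂ :=
  of fun i j => if cyc3 i j k then P i j else 0

lemma cprod_apply_eq_cycMask_mul_apply (P Q : Matrix (Fin N) (Fin N) ℂ) (i k : Fin N) :
    cprod P Q i k = (cycMask P k * Q) i k := by
  simp only [cprod_apply, cycMask, mul_apply, of_apply, ite_mul, zero_mul]

lemma isLowerTriangular_cycMask_submatrix [NeZero N] (P : Matrix (Fin N) (Fin N) ℂ) (k : Fin N) :
    ((cycMask P k).submatrix (Equiv.subLeft k) (Equiv.subLeft k)).IsLowerTriangular := by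
  intro d e hde
  have : ¬ e ≤ d := not_le.mpr hde
  simp [cycMask, cyc3_iff_sub_le, this]

lemma det_cycMask [NeZero N] (P : Matrix (Fin N) (Fin N) ℂ) (k : Fin N) :
    (cycMask P k).det = ∏ i, P i i := by
  rw [← det_submatrix_equiv_self (Equiv.subLeft k),
    det_of_isLowerTriangular _ (isLowerTriangular_cycMask_submatrix P k)]
  simpa [cycMask, cyc3_self_left] using Equiv.prod_comp (Equiv.subLeft k) (fun i => P i i)

lemma exists_cprod_eq_one [NeZero N] {P : Matrix (Fin N) (Fin N) ℂ} (hP : ∀ i, P i i ≠ 0) :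
    ∃ Q, cprod P Q = 1 := by
  have hdet (k : Fin N) : IsUnit (cycMask P k).det := by
    rw [det_cycMask, isUnit_iff_ne_zero]
    exact Finset.prod_ne_zero_iff.mpr fun i _ => hP i
  refine ⟨of fun j k => (cycMask P k)⁻¹ j k, ?_⟩
  ext i k
  calc cprod P _ i k = (cycMask P k * (cycMask P k)⁻¹) i k := by
        simp only [cprod_apply_eq_cycMask_mul_apply, mul_apply, of_apply]
    _ = (1 : Matrix (Fin N) (Fin N) ℂ) i k := by rw [mul_nonsing_inv _ (hdet k)]

lemma exists_cprod_eq_one_and_cprod_eq_one [NeZero N] {P : Matrix (Fin N) (Fin N) ℂ}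
    (hP : ∀ i, P i i ≠ 0) : ∃ Q, cprod P Q = 1 ∧ cprod Q P = 1 := by
  obtain ⟨Q, hPQ⟩ := exists_cprod_eq_one hP
  obtain ⟨R, hQR⟩ := exists_cprod_eq_one fun i =>
    right_ne_zero_of_mul_eq_one (mul_apply_self_eq_one_of_cprod_eq_one hPQ i)
  have hRP : R = P := calc
    R = cprod (cprod P Q) R := by rw [hPQ, one_cprod]
    _ = cprod P (cprod Q R) := cprod_assoc P Q R
    _ = P := by rw [hQR, cprod_one]
  exact ⟨Q, hPQ, hRP ▸ hQR⟩

end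

/-- A matrix `P` has a two-sided inverse for the product `•` if and only if all of its
diagonal entries are nonzero.  In particular the set
`U = {M : M_{ii} = 1 for all i}` is a group under `•` (it is closed under `•` and under
taking `•`-inverses; associativity and the unit are established separately). -/
theorem brauer_cprod_invertible_iff_diag_nonzero (N : ℕ) (hN : 0 < N) :
    (∀ P : Matrix (Fin N) (Fin N) ℂ,
      (∃ Q : Matrix (Fin N) (Fin N) ℂ, cprod P Q = 1 ∧ cprod Q P = 1) ↔
        (∀ i : Fin N, P i i ≠ 0)) ∧
    (∀ P Q : Matrix (Fin N) (Fin N) ℂ, (∀ i, P i i = 1) → (∀ i, Q i i = 1) →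
      (∀ i, cprod P Q i i = 1)) ∧
    (∀ P : Matrix (Fin N) (Fin N) ℂ, (∀ i, P i i = 1) →
      ∃ Q : Matrix (Fin N) (Fin N) ℂ, (∀ i, Q i i = 1) ∧
        cprod P Q = 1 ∧ cprod Q P = 1) := by
  have : NeZero N := ⟨hN.ne'⟩
  refine ⟨fun P => ⟨?_, exists_cprod_eq_one_and_cprod_eq_one⟩, ?_, ?_⟩
  · rintro ⟨Q, hPQ, -⟩ i
    exact left_ne_zero_of_mul_eq_one (mul_apply_self_eq_one_of_cprod_eq_one hPQ i)
  · intro P Q hP hQ i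
    rw [cprod_apply_self, hP, hQ, one_mul]
  · intro P hP
    obtain ⟨Q, hPQ, hQP⟩ := exists_cprod_eq_one_and_cprod_eq_one fun i => (hP i).symm ▸ one_ne_zero
    refine ⟨Q, fun i => ?_, hPQ, hQP⟩
    simpa [hP i] using mul_apply_self_eq_one_of_cprod_eq_one hPQ i
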